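/- arXiv:0704.3902 — 2 statements merged into one kernel-verified Lean document; each statement's English description precedes it below -/
import Mathlib

section
/- For the measure Λ(dx) = α(1−α/2)x^{α−1}dx + (α/2)δ_1(dx) with 0<α<1, the mean jump satisfies E[J_n −1] = 1/(1−α) − n^{α−1}/((1−α)Γ(α)) · (1 + O(1/n)) as n→∞; in particular the error term E[J_n−1] − 1/(1−α) is of exact order n^{α−1} and not O(n^{−1}). -/
open MeasureTheory Filter Asymptotics

/-- Λ-coalescent collision rate `λ_{n,j} = C(n,j) ∫_0^1 x^{j-2}(1-x)^{n-j} Λ(dx)`. -/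
noncomputable def collRate (Λ : Measure ℝ) (b j : ℕ) : ℝ :=
  (b.choose j : ℝ) * ∫ x in Set.Icc (0:ℝ) 1, x ^ (j - 2) * (1 - x) ^ (b - j) ∂Λ

/-- Total collision rate `λ_n = Σ_{j=2}^n λ_{n,j}`. -/
noncomputable def totRate (Λ : Measure ℝ) (b : ℕ) : ℝ :=
  ∑ j ∈ Finset.Icc 2 b, collRate Λ b j

/-- The measure `Λ(dx) = α(1-α/2)x^{α-1}dx + (α/2)δ₁(dx)`, a mixture of the
beta(α,1) distribution and a point mass at 1. -/
noncomputable def mixMeasure (α : ℝ) : Measure ℝ :=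
  (volume.restrict (Set.Ioc (0:ℝ) 1)).withDensity
      (fun x => ENNReal.ofReal (α * (1 - α / 2) * x ^ (α - 1)))
    + (ENNReal.ofReal (α / 2)) • Measure.dirac 1

/-- Rising factorial `(α)_k = α(α+1)⋯(α+k-1)`, `(α)_0 = 1`. -/
noncomputable def risingFac (α : ℝ) (k : ℕ) : ℝ :=
  ∏ i ∈ Finset.range k, (α + i)

/-! The moments of `Λ` against `x^k (1-x)^m` are Beta integrals, which gives
`λ_{n,j} = K_n (α-2)_j / j! + (α/2)[j = n]` with `K_n = α(1-α/2) n! / (α-2)_{n+1}`.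
Since `a (a)_j / j! = (a)_{j+1} / j! - (a)_j / (j-1)!`, both `Σ_j λ_{n,j}` and
`Σ_j (j-1) λ_{n,j}` telescope, and `E[J_n - 1] = (1 - (α)_{n-1} / (n-1)!) / (1 - α)`.
Finally `Γ(α) (α)_{n-1} / (n-1)! = Γ(n-1+α) / Γ(n)`, and Gautschi's inequality
(log-convexity of `Γ`) traps this ratio between `n^{α-1}` and `n^{α-1} (1 + 2/n)`. -/

open Set

lemma risingFac_succ (a : ℝ) (k : ℕ) : risingFac a (k + 1) = risingFac a k * (a + k) :=
  Finset.prod_range_succ _ _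

lemma risingFac_add (a : ℝ) (k l : ℕ) :
    risingFac a (k + l) = risingFac a k * risingFac (a + k) l := by
  induction l with
  | zero => simp [risingFac]
  | succ l ih =>
    rw [← add_assoc, risingFac_succ, ih, risingFac_succ]
    push_cast
    ring

lemma risingFac_pos {a : ℝ} (ha : 0 < a) (k : ℕ) : 0 < risingFac a k :=
  Finset.prod_pos fun _ _ => by positivity

lemma risingFac_ne_zero {a : ℝ} (ha : ∀ i : ℕ, a + i ≠ 0) (k : ℕ) : risingFac a k ≠ 0 :=
  Finset.prod_ne_zero_iff.mpr fun i _ => ha i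

lemma risingFac_two (a : ℝ) : risingFac a 2 = a * (a + 1) := by
  simp [risingFac, Finset.prod_range_succ]

lemma risingFac_sub_two (a : ℝ) (k : ℕ) :
    risingFac (a - 2) (k + 2) = (a - 2) * (a - 1) * risingFac a k := by
  rw [add_comm k, risingFac_add, risingFac_two, show a - 2 + ((2 : ℕ) : ℝ) = a by push_cast; ring]
  ring

lemma Gamma_add_natCast {a : ℝ} (ha : 0 < a) (k : ℕ) :
    Real.Gamma (a + k) = risingFac a k * Real.Gamma a := by
  induction k with
  | zero => simp [risingFac]
  | succ k ih =>
    rw [Nat.cast_succ, ← add_assoc, Real.Gamma_add_one (by positivity), ih, risingFac_succ]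
    ring

lemma integral_rpow_mul_one_sub_pow {b : ℝ} (hb : 0 < b) (m : ℕ) :
    ∫ x in (0:ℝ)..1, x ^ (b - 1) * (1 - x) ^ m = m.factorial / risingFac b (m + 1) := by
  have h := Complex.betaIntegral_eval_nat_add_one_right (u := b) (by simpa using hb) m
  apply Complex.ofReal_injective
  push_cast [risingFac]
  rw [← h, Complex.betaIntegral, ← intervalIntegral.integral_ofReal]
  refine intervalIntegral.integral_congr fun x hx => ?_
  rw [uIcc_of_le zero_le_one] at hx
  push_cast
  rw [Complex.ofReal_cpow hx.1, add_sub_cancel_right, Complex.cpow_natCast]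
  push_cast
  rfl

lemma restrict_Icc_mixMeasure (α : ℝ) : (mixMeasure α).restrict (Icc 0 1) = mixMeasure α := by
  rw [mixMeasure, Measure.restrict_add, restrict_withDensity measurableSet_Icc,
    Measure.restrict_restrict measurableSet_Icc, inter_eq_self_of_subset_right Ioc_subset_Icc_self,
    Measure.restrict_smul, restrict_dirac' measurableSet_Icc]
  simp

lemma setIntegral_mixMeasure {α : ℝ} (hα0 : 0 < α) (hα2 : α ≤ 2) {f : ℝ → ℝ}
    (hf : Continuous f) :
    ∫ x in Icc 0 1, f x ∂mixMeasure α
      = α * (1 - α / 2) * (∫ x in (0:ℝ)..1, x ^ (α - 1) * f x) + α / 2 * f 1 := by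
  set d : ℝ → ℝ := fun x => α * (1 - α / 2) * x ^ (α - 1)
  have hd : Measurable fun x => ENNReal.ofReal (d x) := by fun_prop
  have hd_top : ∀ᵐ x ∂volume.restrict (Ioc (0:ℝ) 1), ENNReal.ofReal (d x) < ⊤ :=
    ae_of_all _ fun _ => ENNReal.ofReal_lt_top
  have hd_toReal : ∀ᵐ x ∂volume.restrict (Ioc (0:ℝ) 1), (ENNReal.ofReal (d x)).toReal = d x := by
    filter_upwards [ae_restrict_mem measurableSet_Ioc] with x hx
    exact ENNReal.toReal_ofReal <| mul_nonneg (mul_nonneg hα0.le (by linarith))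
      (Real.rpow_nonneg hx.1.le _)
  have hint : IntegrableOn (fun x => x ^ (α - 1) * f x) (Ioc 0 1) :=
    (intervalIntegrable_iff_integrableOn_Ioc_of_le zero_le_one).mp
      ((intervalIntegral.intervalIntegrable_rpow' (by linarith)).mul_continuousOn hf.continuousOn)
  have hdensity : ∫ x in Ioc 0 1, (ENNReal.ofReal (d x)).toReal • f x
      = α * (1 - α / 2) * ∫ x in Ioc 0 1, x ^ (α - 1) * f x := by
    rw [← integral_const_mul]
    refine integral_congr_ae ?_
    filter_upwards [hd_toReal] with x hx
    rw [hx, smul_eq_mul, mul_assoc]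
  rw [restrict_Icc_mixMeasure, mixMeasure, integral_add_measure,
    integral_withDensity_eq_integral_toReal_smul hd hd_top, hdensity,
    integral_smul_measure, integral_dirac, ENNReal.toReal_ofReal (by positivity),
    intervalIntegral.integral_of_le zero_le_one, smul_eq_mul]
  · rw [integrable_withDensity_iff hd hd_top]
    refine (hint.const_mul (α * (1 - α / 2))).congr ?_
    filter_upwards [hd_toReal] with x hx
    rw [hx]
    ring
  · exact (integrable_dirac enorm_lt_top).smul_measure ENNReal.ofReal_ne_top

lemma setIntegral_mixMeasure_pow_mul_one_sub_pow {α : ℝ} (hα0 : 0 < α) (hα2 : α ≤ 2) (k m : ℕ) :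
    ∫ x in Icc 0 1, x ^ k * (1 - x) ^ m ∂mixMeasure α
      = α * (1 - α / 2) * (m.factorial / risingFac (α + k) (m + 1)) + α / 2 * 0 ^ m := by
  rw [setIntegral_mixMeasure hα0 hα2 (by fun_prop),
    ← integral_rpow_mul_one_sub_pow (by positivity : 0 < α + k)]
  congr 2
  · refine intervalIntegral.integral_congr_ae (ae_of_all _ fun x hx => ?_)
    rw [uIoc_of_le zero_le_one] at hx
    rw [add_sub_right_comm, Real.rpow_add_natCast hx.1.ne', mul_assoc]
  · simp

lemma collRate_mixMeasure {α : ℝ} (hα0 : 0 < α) (hα1 : α < 1) {n j : ℕ} (hj : 2 ≤ j)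
    (hjn : j ≤ n) :
    collRate (mixMeasure α) n j
      = α * (1 - α / 2) * (n.factorial / risingFac (α - 2) (n + 1))
          * (risingFac (α - 2) j / j.factorial) + if j = n then α / 2 else 0 := by
  have hne : ∀ i : ℕ, α - 2 + i ≠ 0 := by
    intro i hi
    rcases Nat.lt_or_ge i 2 with h | h
    · interval_cases i <;> norm_num at hi <;> linarith
    · have : (2:ℝ) ≤ i := by exact_mod_cast h
      linarith
  have hsplit : risingFac (α - 2) (n + 1)
      = risingFac (α - 2) j * risingFac (α + (j - 2 : ℕ)) (n - j + 1) := by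
    rw [show n + 1 = j + (n - j + 1) by omega, risingFac_add]
    congr 2
    push_cast [Nat.cast_sub hj]
    ring
  have hchoose : (n.choose j : ℝ) * j.factorial * (n - j).factorial = n.factorial := by
    exact_mod_cast Nat.choose_mul_factorial_mul_factorial hjn
  have hj0 := risingFac_ne_zero hne j
  have hR := (risingFac_pos (by positivity : 0 < α + (j - 2 : ℕ)) (n - j + 1)).ne'
  rw [collRate, setIntegral_mixMeasure_pow_mul_one_sub_pow hα0 (by linarith), hsplit]
  rcases hjn.eq_or_lt with rfl | hlt
  · simp only [Nat.sub_self, pow_zero, Nat.choose_self, if_true] at hchoose hR ⊢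
    field_simp
    linear_combination (α * (2 - α)) * hchoose
  · rw [if_neg hlt.ne, zero_pow (by omega)]
    field_simp
    linear_combination (α * (2 - α)) * hchoose

lemma mul_sum_risingFac_div_factorial (a : ℝ) {m n : ℕ} (hm : 1 ≤ m) (hmn : m ≤ n) :
    a * ∑ j ∈ Finset.Icc m n, risingFac a j / j.factorial
      = risingFac a (n + 1) / n.factorial - risingFac a m / (m - 1).factorial := by
  have step : ∀ j ∈ Finset.Icc m n, a * (risingFac a j / j.factorial)
      = risingFac a (j + 1) / (j + 1 - 1).factorial - risingFac a j / (j - 1).factorial := by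
    intro j hj
    obtain ⟨k, rfl⟩ : ∃ k, j = k + 1 := ⟨j - 1, by grind⟩
    simp only [Nat.add_sub_cancel, risingFac_succ, Nat.factorial_succ]
    push_cast
    field_simp
    ring
  rw [Finset.mul_sum, Finset.sum_congr rfl step]
  exact Finset.sum_Icc_sub hmn fun j => risingFac a j / (j - 1).factorial

lemma mul_sum_risingFac_div_factorial_pred (a : ℝ) {m n : ℕ} (hm : 2 ≤ m) (hmn : m ≤ n) :
    (a + 1) * ∑ j ∈ Finset.Icc m n, risingFac a j / (j - 1).factorial
      = risingFac a (n + 1) / (n - 1).factorial - risingFac a m / (m - 2).factorial := by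
  have step : ∀ j ∈ Finset.Icc m n, (a + 1) * (risingFac a j / (j - 1).factorial)
      = risingFac a (j + 1) / (j + 1 - 2).factorial - risingFac a j / (j - 2).factorial := by
    intro j hj
    obtain ⟨k, rfl⟩ : ∃ k, j = k + 2 := ⟨j - 2, by grind⟩
    simp only [Nat.add_sub_cancel, show k + 2 + 1 - 2 = k + 1 by omega,
      show k + 2 - 1 = k + 1 by omega, risingFac_succ, Nat.factorial_succ]
    push_cast
    field_simp
    ring
  rw [Finset.mul_sum, Finset.sum_congr rfl step]
  exact Finset.sum_Icc_sub hmn fun j => risingFac a j / (j - 2).factorial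

lemma totRate_mixMeasure {α : ℝ} (hα0 : 0 < α) (hα1 : α < 1) {n : ℕ} (hn : 2 ≤ n) :
    totRate (mixMeasure α) n = α / 2 * n.factorial / risingFac α (n - 1) := by
  have hS := mul_sum_risingFac_div_factorial (α - 2) one_le_two hn
  have hP := (risingFac_pos hα0 (n - 1)).ne'
  have hα2 : α - 2 ≠ 0 := by linarith
  have hα1' : α - 1 ≠ 0 := by linarith
  rw [totRate, Finset.sum_congr rfl fun j hj => collRate_mixMeasure hα0 hα1
      (Finset.mem_Icc.mp hj).1 (Finset.mem_Icc.mp hj).2,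
    Finset.sum_add_distrib, ← Finset.mul_sum, Finset.sum_ite_eq' _ _ (fun _ => α / 2),
    if_pos (Finset.right_mem_Icc.mpr hn), eq_div_of_mul_eq hα2 ((mul_comm _ _).trans hS),
    show n + 1 = n - 1 + 2 by omega, risingFac_sub_two, risingFac_two,
    show Nat.factorial (2 - 1) = 1 from rfl, Nat.cast_one]
  field_simp
  ring

lemma sum_sub_one_mul_collRate_mixMeasure {α : ℝ} (hα0 : 0 < α) (hα1 : α < 1) {n : ℕ}
    (hn : 2 ≤ n) :
    ∑ j ∈ Finset.Icc 2 n, ((j : ℝ) - 1) * collRate (mixMeasure α) n j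
      = α / (2 * (1 - α)) * (n.factorial / risingFac α (n - 1) - n) := by
  set K := α * (1 - α / 2) * (n.factorial / risingFac (α - 2) (n + 1)) with hK
  have hterm : ∀ j ∈ Finset.Icc 2 n, ((j : ℝ) - 1) * collRate (mixMeasure α) n j
      = K * (risingFac (α - 2) j / (j - 1).factorial) - K * (risingFac (α - 2) j / j.factorial)
        + if j = n then ((n : ℝ) - 1) * (α / 2) else 0 := by
    intro j hj
    obtain ⟨hj2, hjn⟩ := Finset.mem_Icc.mp hj
    have hfac : (j.factorial : ℝ) = j * (j - 1).factorial := by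
      exact_mod_cast (Nat.mul_factorial_pred (by omega : j ≠ 0)).symm
    rw [collRate_mixMeasure hα0 hα1 hj2 hjn, hfac]
    split_ifs with h
    · subst h
      field_simp
      ring
    · field_simp
      ring
  have hS0 := mul_sum_risingFac_div_factorial (α - 2) one_le_two hn
  have hS1 := mul_sum_risingFac_div_factorial_pred (α - 2) le_rfl hn
  have hP := (risingFac_pos hα0 (n - 1)).ne'
  have hα2 : α - 2 ≠ 0 := by linarith
  have hα2' : α - 2 + 1 ≠ 0 := by linarith
  have hα1' : α - 1 ≠ 0 := by linarith
  have h1α : 1 - α ≠ 0 := by linarith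
  have hfac : (n.factorial : ℝ) = n * (n - 1).factorial := by
    exact_mod_cast (Nat.mul_factorial_pred (by omega : n ≠ 0)).symm
  rw [Finset.sum_congr rfl hterm, Finset.sum_add_distrib, Finset.sum_sub_distrib,
    ← Finset.mul_sum, ← Finset.mul_sum, Finset.sum_ite_eq' _ _ (fun _ => ((n : ℝ) - 1) * (α / 2)),
    if_pos (Finset.right_mem_Icc.mpr hn), eq_div_of_mul_eq hα2 ((mul_comm _ _).trans hS0),
    eq_div_of_mul_eq hα2' ((mul_comm _ _).trans hS1), hK, show n + 1 = n - 1 + 2 by omega,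
    risingFac_sub_two, risingFac_two, hfac, show Nat.factorial (2 - 1) = 1 from rfl,
    show Nat.factorial (2 - 2) = 1 from rfl, Nat.cast_one]
  field_simp
  ring

/-- `E[J_n - 1]`, where `P(J_n = j) = λ_{n,j} / λ_n`. -/
noncomputable def meanJump (Λ : Measure ℝ) (n : ℕ) : ℝ :=
  ∑ j ∈ Finset.Icc 2 n, ((j : ℝ) - 1) * (collRate Λ n j / totRate Λ n)

lemma meanJump_mixMeasure {α : ℝ} (hα0 : 0 < α) (hα1 : α < 1) {n : ℕ} (hn : 2 ≤ n) :
    meanJump (mixMeasure α) n = 1 / (1 - α) - risingFac α (n - 1) / (n - 1).factorial / (1 - α) := by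
  have hP := (risingFac_pos hα0 (n - 1)).ne'
  have hfac : (n.factorial : ℝ) = n * (n - 1).factorial := by
    exact_mod_cast (Nat.mul_factorial_pred (by omega : n ≠ 0)).symm
  simp only [meanJump, mul_div_assoc', ← Finset.sum_div]
  rw [sum_sub_one_mul_collRate_mixMeasure hα0 hα1 hn, totRate_mixMeasure hα0 hα1 hn, hfac]
  field_simp

lemma Gamma_add_le_rpow_mul_Gamma {x s : ℝ} (hx : 0 < x) (hs0 : 0 < s) (hs1 : s < 1) :
    Real.Gamma (x + s) ≤ x ^ s * Real.Gamma x := by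
  have h := Real.Gamma_mul_add_mul_le_rpow_Gamma_mul_rpow_Gamma (s := x) (t := x + 1)
    (a := 1 - s) (b := s) hx (by linarith) (by linarith) hs0 (by ring)
  have hΓ := Real.Gamma_pos_of_pos hx
  rwa [show (1 - s) * x + s * (x + 1) = x + s by ring, Real.Gamma_add_one hx.ne',
    Real.mul_rpow hx.le hΓ.le, mul_left_comm, ← Real.rpow_add hΓ, sub_add_cancel,
    Real.rpow_one] at h

lemma Gamma_add_one_le_rpow_mul_Gamma_add {x s : ℝ} (hx : 0 < x) (hs0 : 0 < s) (hs1 : s < 1) :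
    Real.Gamma (x + 1) ≤ (x + s) ^ (1 - s) * Real.Gamma (x + s) := by
  have hxs : 0 < x + s := by linarith
  have h := Real.Gamma_mul_add_mul_le_rpow_Gamma_mul_rpow_Gamma (s := x + s) (t := x + s + 1)
    (a := s) (b := 1 - s) hxs (by linarith) hs0 (by linarith) (by ring)
  have hΓ := Real.Gamma_pos_of_pos hxs
  rwa [show s * (x + s) + (1 - s) * (x + s + 1) = x + 1 by ring, Real.Gamma_add_one hxs.ne',
    Real.mul_rpow hxs.le hΓ.le, mul_left_comm, ← Real.rpow_add hΓ, add_sub_cancel,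
    Real.rpow_one] at h

lemma sub_one_rpow_le_rpow_mul {y t : ℝ} (hy : 2 ≤ y) (ht : -1 ≤ t) :
    (y - 1) ^ t ≤ y ^ t * (1 + 2 / y) := by
  have hy1 : 0 < y - 1 := by linarith
  have hy0 : 0 < y := by linarith
  have hratio : ((y - 1) / y) ^ t ≤ 1 + 2 / y :=
    calc ((y - 1) / y) ^ t ≤ ((y - 1) / y) ^ (-1 : ℝ) :=
          Real.rpow_le_rpow_of_exponent_ge (by positivity) (by rw [div_le_one hy0]; linarith) ht
      _ = y / (y - 1) := by rw [Real.rpow_neg_one, inv_div]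
      _ ≤ 1 + 2 / y := by
          rw [div_le_iff₀ hy1]
          field_simp
          nlinarith
  calc (y - 1) ^ t = y ^ t * ((y - 1) / y) ^ t := by
        rw [Real.div_rpow hy1.le hy0.le, mul_div_cancel₀ _ (Real.rpow_pos_of_pos hy0 t).ne']
    _ ≤ y ^ t * (1 + 2 / y) := by gcongr

noncomputable def gammaRatio (α : ℝ) (n : ℕ) : ℝ :=
  Real.Gamma (n - 1 + α) / Real.Gamma n

lemma gammaRatio_eq {α : ℝ} (hα0 : 0 < α) {n : ℕ} (hn : 1 ≤ n) :
    gammaRatio α n = Real.Gamma α * (risingFac α (n - 1) / (n - 1).factorial) := by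
  obtain ⟨k, rfl⟩ : ∃ k, n = k + 1 := ⟨n - 1, by omega⟩
  rw [gammaRatio, Nat.add_sub_cancel, Nat.cast_succ, add_sub_cancel_right, add_comm (k : ℝ) α,
    Gamma_add_natCast hα0, Real.Gamma_nat_eq_factorial]
  ring

lemma natCast_rpow_le_gammaRatio {α : ℝ} (hα0 : 0 < α) (hα1 : α < 1) {n : ℕ} (hn : 2 ≤ n) :
    (n : ℝ) ^ (α - 1) ≤ gammaRatio α n := by
  have hn2 : (2 : ℝ) ≤ n := by exact_mod_cast hn
  have hx : 0 < (n : ℝ) - 1 + α := by linarith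
  have hΓ := Real.Gamma_pos_of_pos (by linarith : (0 : ℝ) < n)
  have hGautschi := Gamma_add_one_le_rpow_mul_Gamma_add (x := (n : ℝ) - 1) (by linarith) hα0 hα1
  rw [sub_add_cancel] at hGautschi
  rw [gammaRatio, le_div_iff₀ hΓ]
  calc (n : ℝ) ^ (α - 1) * Real.Gamma n
      ≤ (n - 1 + α) ^ (α - 1) * ((n - 1 + α) ^ (1 - α) * Real.Gamma (n - 1 + α)) :=
        mul_le_mul (Real.rpow_le_rpow_of_nonpos hx (by linarith) (by linarith)) hGautschi
          hΓ.le (by positivity)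
    _ = Real.Gamma (n - 1 + α) := by
        rw [← mul_assoc, ← Real.rpow_add hx, sub_add_sub_cancel', sub_self, Real.rpow_zero,
          one_mul]

lemma gammaRatio_le {α : ℝ} (hα0 : 0 < α) (hα1 : α < 1) {n : ℕ} (hn : 2 ≤ n) :
    gammaRatio α n ≤ (n : ℝ) ^ (α - 1) * (1 + 2 / n) := by
  have hn2 : (2 : ℝ) ≤ n := by exact_mod_cast hn
  have hx : 0 < (n : ℝ) - 1 := by linarith
  have hΓ : Real.Gamma n = (n - 1) * Real.Gamma (n - 1) := by
    rw [← Real.Gamma_add_one hx.ne', sub_add_cancel]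
  rw [gammaRatio, div_le_iff₀ (Real.Gamma_pos_of_pos (by linarith)), hΓ]
  calc Real.Gamma (n - 1 + α) ≤ (n - 1) ^ α * Real.Gamma (n - 1) :=
        Gamma_add_le_rpow_mul_Gamma hx hα0 hα1
    _ = (n - 1) ^ (α - 1) * ((n - 1) * Real.Gamma (n - 1)) := by
        rw [← mul_assoc, ← Real.rpow_add_one hx.ne', sub_add_cancel]
    _ ≤ (n : ℝ) ^ (α - 1) * (1 + 2 / n) * ((n - 1) * Real.Gamma (n - 1)) := by
        gcongr
        exact sub_one_rpow_le_rpow_mul hn2 (by linarith)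

lemma isBigO_gammaRatio_div_rpow_sub_one {α : ℝ} (hα0 : 0 < α) (hα1 : α < 1) :
    (fun n : ℕ => gammaRatio α n / (n : ℝ) ^ (α - 1) - 1) =O[atTop] fun n : ℕ => (n : ℝ)⁻¹ := by
  refine IsBigO.of_bound 2 ?_
  filter_upwards [eventually_ge_atTop 2] with n hn
  have hpow : 0 < (n : ℝ) ^ (α - 1) := by positivity
  rw [Real.norm_of_nonneg, Real.norm_of_nonneg (by positivity), sub_le_iff_le_add,
    div_le_iff₀ hpow]
  · exact (gammaRatio_le hα0 hα1 hn).trans_eq (by ring)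
  · rw [sub_nonneg, le_div_iff₀ hpow, one_mul]
    exact natCast_rpow_le_gammaRatio hα0 hα1 hn

lemma not_isBigO_natCast_rpow_inv {s : ℝ} (hs : -1 < s) :
    ¬ (fun n : ℕ => (n : ℝ) ^ s) =O[atTop] fun n : ℕ => (n : ℝ)⁻¹ := by
  intro h
  obtain ⟨c, hc⟩ := h.bound
  have hlim : Tendsto (fun n : ℕ => (n : ℝ) ^ (s + 1)) atTop atTop :=
    (tendsto_rpow_atTop (by linarith)).comp tendsto_natCast_atTop_atTop
  obtain ⟨n, hle, hgt, hpos⟩ :=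
    (hc.and ((hlim.eventually_gt_atTop c).and (eventually_gt_atTop 0))).exists
  have hn : (0 : ℝ) < n := by exact_mod_cast hpos
  rw [Real.norm_of_nonneg (by positivity), Real.norm_of_nonneg (by positivity),
    ← div_eq_mul_inv, le_div_iff₀ hn, ← Real.rpow_add_one hn.ne'] at hle
  linarith

/-- For the mixture measure, `E[J_n-1] = 1/(1-α) - n^{α-1}/((1-α)Γ(α))·(1+O(1/n))`;
in particular the error `E[J_n-1] - 1/(1-α)` is of exact order `n^{α-1}`, not
`O(n^{-1})`. -/
theorem stmt16 (α : ℝ) (hα0 : 0 < α) (hα1 : α < 1) :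
    (∃ g : ℕ → ℝ, (g =O[atTop] fun n : ℕ => (n : ℝ)⁻¹) ∧
      ∀ᶠ n : ℕ in atTop,
        ∑ j ∈ Finset.Icc 2 n,
            ((j : ℝ) - 1) * (collRate (mixMeasure α) n j / totRate (mixMeasure α) n)
          = 1 / (1 - α)
            - (n : ℝ) ^ (α - 1) / ((1 - α) * Real.Gamma α) * (1 + g n)) ∧
    ¬ ((fun n : ℕ =>
          (∑ j ∈ Finset.Icc 2 n,
            ((j : ℝ) - 1) * (collRate (mixMeasure α) n j / totRate (mixMeasure α) n))
            - 1 / (1 - α))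
        =O[atTop] fun n : ℕ => (n : ℝ)⁻¹) := by
  simp only [← meanJump.eq_1]
  have hc : 0 < (1 - α) * Real.Gamma α := mul_pos (by linarith) (Real.Gamma_pos_of_pos hα0)
  have hmean : ∀ n : ℕ, 2 ≤ n →
      meanJump (mixMeasure α) n = 1 / (1 - α) - gammaRatio α n / ((1 - α) * Real.Gamma α) := by
    intro n hn
    rw [meanJump_mixMeasure hα0 hα1 hn, gammaRatio_eq hα0 (by omega)]
    field_simp
  refine ⟨⟨_, isBigO_gammaRatio_div_rpow_sub_one hα0 hα1, ?_⟩, fun h => ?_⟩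
  · filter_upwards [eventually_ge_atTop 2] with n hn
    rw [hmean n hn]
    field_simp
    ring
  · refine not_isBigO_natCast_rpow_inv (by linarith : -1 < α - 1) (IsBigO.trans ?_ h)
    refine IsBigO.of_bound ((1 - α) * Real.Gamma α) ?_
    filter_upwards [eventually_ge_atTop 2] with n hn
    have hlow := natCast_rpow_le_gammaRatio hα0 hα1 hn
    have hpow : 0 < (n : ℝ) ^ (α - 1) := by positivity
    rw [hmean n hn, sub_sub_cancel_left, norm_neg, Real.norm_of_nonneg hpow.le,
      Real.norm_of_nonneg (div_nonneg (hpow.le.trans hlow) hc.le), mul_div_cancel₀ _ hc.ne']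
    exact hlow
end

section
/- For a finite measure Λ on [0,1] and n ≥ 2, the characteristic function φ_n(u) = E[e^{iu(J_n−1)}] of the decrement J_n−1 (where P(J_n=j)=λ_{n,j}/λ_n) satisfies φ_n(u) = 1 − ((1−e^{−iu})/λ_n) Σ_{j=1}^{n−1} ∫_0^1 ((1−x)^j − (1−(1−e^{iu})x)^j)/x Λ(dx). -/
open MeasureTheory

/-!
Write `z = e^{iu}`, `a = 1 - x` and `b = 1 - (1 - z) x = a + z x`. By the binomial theorem,
`x² z ∑_{j ≥ 2} C(n,j) x^{j-2} a^{n-j} (z^{j-1} - 1) = b^n + (z - 1) a^n - z`, and since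
`z x ∑_{m<k} a^m b^{k-1-m} = b^k - a^k`, summing geometric series shows that
`x² z (z - 1) ∑_{k<n} ∑_{m<k} a^m b^{k-1-m}` is the same polynomial. The two polynomials in `x`
thus agree for `x ≠ 0`, hence everywhere. The integrand of the theorem is
`-z ∑_{m<k} a^m b^{k-1-m}`, also at `x = 0`, so integrating against `Λ` and dividing by
`λ_n = ∑_j λ_{n,j}` gives the formula.
-/

open Finset

section Algebra

variable {R : Type*} [CommRing R]

lemma sum_range_succ_eq_add_sum_Icc_two {M : Type*} [AddCommMonoid M] (f : ℕ → M) (n : ℕ) :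
    ∑ j ∈ range (n + 2), f j = f 0 + f 1 + ∑ j ∈ Icc 2 (n + 1), f j := by
  rw [range_eq_Ico, sum_eq_sum_Ico_succ_bot (by omega), sum_eq_sum_Ico_succ_bot (by omega),
    ← add_assoc, ← Finset.Ico_add_one_right_eq_Icc]
  rfl

lemma sq_mul_mul_sum_choose_mul_pow_sub_one (x z : R) (n : ℕ) :
    x ^ 2 * z * ∑ j ∈ Icc 2 n,
        (n.choose j : R) * x ^ (j - 2) * (1 - x) ^ (n - j) * (z ^ (j - 1) - 1)
      = (1 - (1 - z) * x) ^ n + (z - 1) * (1 - x) ^ n - z := by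
  obtain _ | n := n
  · simp
  set f : ℕ → R := fun j => ((z * x) ^ j - z * x ^ j) * (1 - x) ^ (n + 1 - j) * (n + 1).choose j
  have hf : ∀ j ∈ Icc 2 (n + 1), x ^ 2 * z *
      ((n + 1).choose j * x ^ (j - 2) * (1 - x) ^ (n + 1 - j) * (z ^ (j - 1) - 1)) = f j := by
    intro j hj
    obtain ⟨i, rfl⟩ : ∃ i, j = i + 2 := ⟨j - 2, by grind⟩
    simp only [f, Nat.add_sub_cancel, show i + 2 - 1 = i + 1 by omega]
    ring
  have hsum : ∑ j ∈ range (n + 2), f j = (1 - (1 - z) * x) ^ (n + 1) - z := by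
    simp only [f, sub_mul, sum_sub_distrib, mul_assoc z, ← mul_sum, ← add_pow]
    ring_nf
  have hf01 : f 0 + f 1 = (1 - z) * (1 - x) ^ (n + 1) := by simp [f]
  rw [mul_sum, sum_congr rfl hf]
  linear_combination hsum - sum_range_succ_eq_add_sum_Icc_two f n - hf01

lemma sq_mul_mul_sum_geom_sum₂ (x z : R) (n : ℕ) :
    x ^ 2 * z * ((z - 1) * ∑ k ∈ Icc 1 (n - 1), ∑ m ∈ range k,
        (1 - x) ^ m * (1 - (1 - z) * x) ^ (k - 1 - m))
      = (1 - (1 - z) * x) ^ n + (z - 1) * (1 - x) ^ n - z := by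
  set a := 1 - x with ha
  set b := 1 - (1 - z) * x with hb
  have hG : ∀ k, z * x * ∑ m ∈ range k, a ^ m * b ^ (k - 1 - m) = b ^ k - a ^ k := fun k => by
    linear_combination (-1 : R) * geom_sum₂_mul a b k
  have hIcc : ∑ k ∈ Icc 1 (n - 1), (b ^ k - a ^ k) = ∑ k ∈ range n, (b ^ k - a ^ k) := by
    refine sum_subset (fun k hk => by simp only [mem_Icc, mem_range] at hk ⊢; omega) ?_
    intro k hk hk'
    obtain rfl : k = 0 := by simp only [mem_Icc, mem_range] at hk hk'; omega
    simp
  calc x ^ 2 * z * ((z - 1) * ∑ k ∈ Icc 1 (n - 1), ∑ m ∈ range k, a ^ m * b ^ (k - 1 - m))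
      = (z - 1) * x * ∑ k ∈ range n, (b ^ k - a ^ k) := by
        rw [← hIcc, ← sum_congr rfl fun k _ => hG k, ← mul_sum]
        ring
    _ = b ^ n + (z - 1) * a ^ n - z := by
        rw [sum_sub_distrib]
        linear_combination geom_sum_mul b n + (z - 1) * geom_sum_mul a n
          - (∑ k ∈ range n, b ^ k) * hb - (z - 1) * (∑ k ∈ range n, a ^ k) * ha

end Algebra

lemma sum_choose_mul_pow_sub_one_eq {𝕜 : Type*} [NontriviallyNormedField 𝕜] {z : 𝕜}
    (hz : z ≠ 0) (n : ℕ) (x : 𝕜) :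
    ∑ j ∈ Icc 2 n, (n.choose j : 𝕜) * x ^ (j - 2) * (1 - x) ^ (n - j) * (z ^ (j - 1) - 1)
      = (z - 1) * ∑ k ∈ Icc 1 (n - 1), ∑ m ∈ range k,
          (1 - x) ^ m * (1 - (1 - z) * x) ^ (k - 1 - m) := by
  refine congrFun (Continuous.ext_on (dense_compl_singleton 0)
    (f := fun x : 𝕜 => ∑ j ∈ Icc 2 n,
      (n.choose j : 𝕜) * x ^ (j - 2) * (1 - x) ^ (n - j) * (z ^ (j - 1) - 1))
    (g := fun x : 𝕜 => (z - 1) * ∑ k ∈ Icc 1 (n - 1), ∑ m ∈ range k,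
      (1 - x) ^ m * (1 - (1 - z) * x) ^ (k - 1 - m))
    (by fun_prop) (by fun_prop) fun x hx => ?_) x
  apply mul_left_cancel₀ (mul_ne_zero (pow_ne_zero 2 hx) hz)
  rw [sq_mul_mul_sum_choose_mul_pow_sub_one, sq_mul_mul_sum_geom_sum₂]

lemma ite_div_eq_neg_mul_geom_sum₂ (z : ℂ) (k : ℕ) (x : ℝ) :
    (if x = 0 then -(k : ℂ) * z
      else ((1 - (x : ℂ)) ^ k - (1 - (1 - z) * (x : ℂ)) ^ k) / (x : ℂ))
      = -z * ∑ m ∈ range k, (1 - (x : ℂ)) ^ m * (1 - (1 - z) * (x : ℂ)) ^ (k - 1 - m) := by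
  split_ifs with hx
  · simp [hx, mul_comm]
  · rw [div_eq_iff (Complex.ofReal_ne_zero.mpr hx)]
    linear_combination (-1 : ℂ) * geom_sum₂_mul (1 - (x : ℂ)) (1 - (1 - z) * (x : ℂ)) k

lemma ofReal_collRate (Λ : Measure ℝ) (n j : ℕ) :
    (collRate Λ n j : ℂ)
      = ∫ x in Set.Icc (0 : ℝ) 1,
          (n.choose j : ℂ) * (x : ℂ) ^ (j - 2) * (1 - (x : ℂ)) ^ (n - j) ∂Λ := by
  rw [collRate, ← integral_const_mul, ← integral_complex_ofReal]
  refine integral_congr_ae (.of_forall fun x => ?_)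
  push_cast
  ring

lemma sum_collRate_mul_pow_sub_one (Λ : Measure ℝ) [IsLocallyFiniteMeasure Λ] {z : ℂ}
    (hz : z ≠ 0) (n : ℕ) :
    ∑ j ∈ Icc 2 n, (collRate Λ n j : ℂ) * (z ^ (j - 1) - 1)
      = -(1 - z⁻¹) * ∑ k ∈ Icc 1 (n - 1), ∫ x in Set.Icc (0 : ℝ) 1,
          (if x = 0 then -(k : ℂ) * z
            else ((1 - (x : ℂ)) ^ k - (1 - (1 - z) * (x : ℂ)) ^ k) / (x : ℂ)) ∂Λ := by
  simp only [ite_div_eq_neg_mul_geom_sum₂, ofReal_collRate, ← integral_mul_const]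
  rw [← integral_finsetSum _ fun j _ => (by fun_prop : Continuous _).integrableOn_Icc,
    ← integral_finsetSum _ fun k _ => (by fun_prop : Continuous _).integrableOn_Icc,
    ← integral_const_mul]
  refine integral_congr_ae (Filter.Eventually.of_forall fun x => ?_)
  simp only [sum_choose_mul_pow_sub_one_eq hz, ← mul_sum]
  field_simp

lemma sum_collRate_div_totRate_mul_pow (Λ : Measure ℝ) [IsLocallyFiniteMeasure Λ] (n : ℕ)
    (htot : totRate Λ n ≠ 0) {z : ℂ} (hz : z ≠ 0) :
    ∑ j ∈ Icc 2 n, ((collRate Λ n j / totRate Λ n : ℝ) : ℂ) * z ^ (j - 1)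
      = 1 - ((1 - z⁻¹) / (totRate Λ n : ℂ)) * ∑ k ∈ Icc 1 (n - 1),
          ∫ x in Set.Icc (0 : ℝ) 1, (if x = 0 then -(k : ℂ) * z
            else ((1 - (x : ℂ)) ^ k - (1 - (1 - z) * (x : ℂ)) ^ k) / (x : ℂ)) ∂Λ := by
  have htot' : (totRate Λ n : ℂ) ≠ 0 := by exact_mod_cast htot
  calc _ = (totRate Λ n + ∑ j ∈ Icc 2 n, (collRate Λ n j : ℂ) * (z ^ (j - 1) - 1))
        / totRate Λ n := by
        rw [totRate, Complex.ofReal_sum, ← sum_add_distrib, sum_div]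
        exact sum_congr rfl fun j _ => by push_cast; ring
    _ = _ := by
      rw [sum_collRate_mul_pow_sub_one Λ hz, add_div, div_self htot', neg_mul, neg_div,
        ← sub_eq_add_neg, mul_div_right_comm]

theorem stmt17_general (Λ : Measure ℝ) [IsFiniteMeasure Λ] (n : ℕ)
    (hpos : 0 < totRate Λ n) (u : ℝ) :
    ∑ j ∈ Finset.Icc 2 n,
        ((collRate Λ n j / totRate Λ n : ℝ) : ℂ)
          * Complex.exp (Complex.I * u * ((j : ℂ) - 1))
      = 1 - ((1 - Complex.exp (-(Complex.I * u))) / (totRate Λ n : ℂ))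
          * ∑ j ∈ Finset.Icc 1 (n - 1),
              ∫ x in Set.Icc (0:ℝ) 1,
                (if x = 0 then -(j : ℂ) * Complex.exp (Complex.I * u)
                 else ((1 - (x:ℂ)) ^ j
                   - (1 - (1 - Complex.exp (Complex.I * u)) * (x:ℂ)) ^ j) / (x:ℂ)) ∂Λ := by
  have hexp : ∀ j ∈ Icc 2 n,
      Complex.exp (Complex.I * u * ((j : ℂ) - 1)) = Complex.exp (Complex.I * u) ^ (j - 1) := by
    intro j hj
    rw [← Complex.exp_nat_mul, Nat.cast_pred (by grind)]
    ring_nf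
  rw [sum_congr rfl fun j hj => by rw [hexp j hj], Complex.exp_neg]
  exact sum_collRate_div_totRate_mul_pow Λ n hpos.ne' (Complex.exp_ne_zero _)

/-- The characteristic function `φ_n(u) = E[e^{iu(J_n-1)}]` of the decrement
satisfies `φ_n(u) = 1 - ((1-e^{-iu})/λ_n) Σ_{j=1}^{n-1} ∫_0^1 ((1-x)^j -
(1-(1-e^{iu})x)^j)/x Λ(dx)`, the integrand being extended by continuity at `x = 0`
(with value `-j e^{iu}`). -/
theorem stmt17 (Λ : Measure ℝ) [IsFiniteMeasure Λ] (n : ℕ) (hn : 2 ≤ n)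
    (hpos : 0 < totRate Λ n) (u : ℝ) :
    ∑ j ∈ Finset.Icc 2 n,
        ((collRate Λ n j / totRate Λ n : ℝ) : ℂ)
          * Complex.exp (Complex.I * u * ((j : ℂ) - 1))
      = 1 - ((1 - Complex.exp (-(Complex.I * u))) / (totRate Λ n : ℂ))
          * ∑ j ∈ Finset.Icc 1 (n - 1),
              ∫ x in Set.Icc (0:ℝ) 1,
                (if x = 0 then -(j : ℂ) * Complex.exp (Complex.I * u)
                 else ((1 - (x:ℂ)) ^ j
                   - (1 - (1 - Complex.exp (Complex.I * u)) * (x:ℂ)) ^ j) / (x:ℂ)) ∂Λ :=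
  stmt17_general Λ n hpos u
end
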